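/- Let N≥2. There exists a constant C_N>0, depending only on N, such that every radially symmetric function u∈H¹(ℝ^N) satisfies the pointwise bound |u(x)| ≤ C_N |x|^{(1−N)/2} ‖u‖_{H¹(ℝ^N)} for almost every x∈ℝ^N, x≠0. -/

import Mathlib

open MeasureTheory Real

noncomputable section

open Set Filter
open scoped ENNReal NNReal

open Module in
lemma my_lintegral_polar {E : Type*} [NormedAddCommGroup E] [NormedSpace ℝ E]
    [MeasurableSpace E] [BorelSpace E] [FiniteDimensional ℝ E] [Nontrivial E]
    (μ : Measure E) [μ.IsAddHaarMeasure] (F : ℝ → ℝ≥0∞) (hF : Measurable F) :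
    ∫⁻ x, F ‖x‖ ∂μ = (finrank ℝ E : ℝ≥0∞) * μ (Metric.ball 0 1) *
      ∫⁻ r in Ioi (0:ℝ), ENNReal.ofReal (r ^ (finrank ℝ E - 1)) * F r := by
  have h1 : ∫⁻ x, F ‖x‖ ∂μ = ∫⁻ x : ({(0:E)}ᶜ : Set E), F ‖(x:E)‖ ∂(μ.comap (↑)) := by
    rw [lintegral_subtype_comap (μ := μ) (measurableSet_singleton (0:E)).compl
      (fun y => F ‖y‖), MeasureTheory.restrict_compl_singleton]
  rw [h1]
  have h2 : ∫⁻ x : ({(0:E)}ᶜ : Set E), F ‖(x:E)‖ ∂(μ.comap (↑)) =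
      ∫⁻ p : Metric.sphere (0:E) 1 × Ioi (0:ℝ), F p.2
        ∂(μ.toSphere.prod (.volumeIoiPow (finrank ℝ E - 1))) := by
    rw [← (μ.measurePreserving_homeomorphUnitSphereProd).lintegral_comp_emb
      (Homeomorph.measurableEmbedding _)
      (fun p : Metric.sphere (0:E) 1 × Ioi (0:ℝ) => F p.2)]
    simp
  rw [h2, lintegral_prod (fun p : ↑(Metric.sphere (0:E) 1) × ↑(Ioi (0:ℝ)) => F ↑p.2) ((hF.comp (measurable_subtype_coe.comp measurable_snd)).aemeasurable)]
  have h3 : ∀ x : ↑(Metric.sphere (0:E) 1),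
      (∫⁻ y : ↑(Ioi (0:ℝ)), F ↑(x, y).2 ∂(Measure.volumeIoiPow (Module.finrank ℝ E - 1)))
        = ∫⁻ y : ↑(Ioi (0:ℝ)), F ↑y ∂(Measure.volumeIoiPow (Module.finrank ℝ E - 1)) :=
    fun x => rfl
  simp only [h3]
  rw [lintegral_const, Measure.toSphere_apply_univ]
  rw [mul_comm]
  congr 1
  rw [Measure.volumeIoiPow, lintegral_withDensity_eq_lintegral_mul _
    ((measurable_subtype_coe.pow_const _).ennreal_ofReal) (show Measurable (fun y : ↑(Ioi (0:ℝ)) => F ↑y) from hF.comp measurable_subtype_coe),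
    show (∫⁻ (a : { x // x ∈ Ioi (0:ℝ) }),
      ((fun x : ↑(Ioi (0:ℝ)) => ENNReal.ofReal (↑x ^ (Module.finrank ℝ E - 1))) * fun y : ↑(Ioi (0:ℝ)) => F ↑y) a
        ∂Measure.comap Subtype.val volume)
      = ∫⁻ (a : ↑(Ioi (0:ℝ))), (fun r : ℝ => ENNReal.ofReal (r ^ (Module.finrank ℝ E - 1)) * F r) ↑a
        ∂Measure.comap Subtype.val volume from rfl,
    lintegral_subtype_comap measurableSet_Ioi (fun r : ℝ => ENNReal.ofReal (r ^ (Module.finrank ℝ E - 1)) * F r)]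

open Module in
lemma my_integrableOn_polar {E : Type*} [NormedAddCommGroup E] [NormedSpace ℝ E]
    [MeasurableSpace E] [BorelSpace E] [FiniteDimensional ℝ E] [Nontrivial E]
    (μ : Measure E) [μ.IsAddHaarMeasure] (G : ℝ → ℝ) (hGm : Measurable G)
    (hG0 : ∀ r, 0 ≤ G r) (h : Integrable (fun x : E => G ‖x‖) μ) :
    IntegrableOn (fun r : ℝ => r ^ (finrank ℝ E - 1) * G r) (Ioi 0) volume := by
  have h1 := h.lintegral_lt_top
  rw [my_lintegral_polar μ (fun r => ENNReal.ofReal (G r)) hGm.ennreal_ofReal] at h1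
  have hd : (finrank ℝ E : ℝ≥0∞) ≠ 0 := by
    exact_mod_cast Nat.cast_ne_zero.mpr finrank_pos.ne'
  have hb : μ (Metric.ball (0:E) 1) ≠ 0 := (Metric.measure_ball_pos μ 0 one_pos).ne'
  have h2 : ∫⁻ r in Ioi (0:ℝ),
      ENNReal.ofReal (r ^ (finrank ℝ E - 1)) * ENNReal.ofReal (G r) < ⊤ := by
    by_contra hc
    rw [lt_top_iff_ne_top, not_ne_iff] at hc
    rw [hc, ENNReal.mul_top (mul_ne_zero hd hb)] at h1
    exact absurd h1 (lt_irrefl ⊤)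
  refine ⟨((measurable_id.pow_const _).mul hGm).aestronglyMeasurable, ?_⟩
  rw [hasFiniteIntegral_iff_ofReal ?_]
  · refine lt_of_le_of_lt (le_of_eq (lintegral_congr_ae ?_)) h2
    filter_upwards [ae_restrict_mem measurableSet_Ioi] with r hr
    exact ENNReal.ofReal_mul (pow_nonneg (le_of_lt hr) _)
  · filter_upwards [ae_restrict_mem measurableSet_Ioi] with r hr
    exact mul_nonneg (pow_nonneg (le_of_lt hr) _) (hG0 r)

lemma my_freq_small {g : ℝ → ℝ} {M : ℝ} (hint : IntegrableOn g (Ioi M) volume)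
    {ε : ℝ} (hε : 0 < ε) : ∃ᶠ b in atTop, g b < ε := by
  by_contra hcon
  rw [Filter.not_frequently] at hcon
  simp only [not_lt] at hcon
  obtain ⟨M', hM'⟩ := Filter.eventually_atTop.1 hcon
  set t : Set ℝ := Ioi (max M M') with ht
  have hint' : Integrable g (volume.restrict t) :=
    hint.mono_set (Ioi_subset_Ioi (le_max_left _ _))
  have h1 : volume.restrict t {x | ε ≤ g x} < ⊤ := hint'.measure_ge_lt_top hε
  have h2 : volume.restrict t t ≤ volume.restrict t {x | ε ≤ g x} := by
    apply measure_mono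
    intro x hx
    exact hM' x (le_of_lt (lt_of_le_of_lt (le_max_right M M') hx))
  rw [Measure.restrict_apply_self, ht, Real.volume_Ioi] at h2
  exact absurd (lt_of_le_of_lt h2 h1) (lt_irrefl ⊤)

lemma my_key1d (n : ℕ) (f : ℝ → ℝ) (hf : Differentiable ℝ f)
    {r : ℝ} (hr : 0 < r)
    (hA : IntegrableOn (fun s : ℝ => s ^ n * f s ^ 2) (Ioi r) volume)
    (hB : IntegrableOn (fun s : ℝ => s ^ n * (deriv f s) ^ 2) (Ioi r) volume) :
    r ^ n * f r ^ 2 ≤ ∫ s in Ioi r, (s ^ n * f s ^ 2 + s ^ n * (deriv f s) ^ 2) := by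
  set g : ℝ → ℝ := fun s => s ^ n * f s ^ 2 with hg
  set φ : ℝ → ℝ := fun s => s ^ n * (2 * f s ^ 1 * deriv f s) with hφ
  have hg' : ∀ s : ℝ, HasDerivAt g ((n : ℝ) * s ^ (n - 1) * f s ^ 2 + φ s) s := by
    intro s
    exact (hasDerivAt_pow n s).mul ((hf s).hasDerivAt.pow 2)
  have hφm : AEStronglyMeasurable φ (volume.restrict (Ioi r)) := by
    refine Measurable.aestronglyMeasurable ?_
    exact (measurable_id.pow_const n).mul
      ((measurable_const.mul (hf.continuous.measurable.pow_const 1)).mul (measurable_deriv f))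
  have hsum : IntegrableOn (fun s : ℝ => s ^ n * f s ^ 2 + s ^ n * (deriv f s) ^ 2)
      (Ioi r) volume := hA.add hB
  have hφbound : ∀ s : ℝ, s ∈ Ioi r → |φ s| ≤ s ^ n * f s ^ 2 + s ^ n * (deriv f s) ^ 2 := by
    intro s hs
    have hs0 : (0:ℝ) ≤ s ^ n := pow_nonneg (le_of_lt (lt_trans hr hs)) n
    rw [hφ, abs_mul, abs_of_nonneg hs0]
    have h2ab : |2 * f s ^ 1 * deriv f s| ≤ f s ^ 2 + deriv f s ^ 2 := by
      rw [abs_mul, abs_mul]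
      simp only [pow_one, abs_two]
      nlinarith [sq_nonneg (|f s| - |deriv f s|), abs_nonneg (f s), abs_nonneg (deriv f s),
        sq_abs (f s), sq_abs (deriv f s)]
    nlinarith [hs0, abs_nonneg (2 * f s ^ 1 * deriv f s)]
  have hφint : IntegrableOn φ (Ioi r) volume := by
    refine Integrable.mono' hsum hφm ?_
    filter_upwards [ae_restrict_mem measurableSet_Ioi] with s hs
    rw [Real.norm_eq_abs]
    exact hφbound s hs
  -- main estimate for each b ≥ r
  have key : ∀ b : ℝ, r ≤ b →
      g r ≤ g b + ∫ s in Ioi r, (s ^ n * f s ^ 2 + s ^ n * (deriv f s) ^ 2) := by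
    intro b hb
    have hD : IntervalIntegrable (fun s => (n : ℝ) * s ^ (n - 1) * f s ^ 2 + φ s)
        volume r b := by
      refine IntervalIntegrable.add ?_ ?_
      · exact Continuous.intervalIntegrable
          ((continuous_const.mul (continuous_pow (n-1))).mul (hf.continuous.pow 2)) r b
      · rw [intervalIntegrable_iff_integrableOn_Ioc_of_le hb]
        exact hφint.mono_set Ioc_subset_Ioi_self
    have hFTC := intervalIntegral.integral_eq_sub_of_hasDerivAt
      (fun s _ => hg' s) hD
    -- ∫ first part nonneg
    have h1 : 0 ≤ ∫ s in r..b, (n : ℝ) * s ^ (n - 1) * f s ^ 2 := by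
      apply intervalIntegral.integral_nonneg hb
      intro s hs
      have : (0:ℝ) ≤ s := le_trans (le_of_lt hr) hs.1
      positivity
    have h2 : |∫ s in r..b, φ s| ≤ ∫ s in Ioi r, (s ^ n * f s ^ 2 + s ^ n * (deriv f s) ^ 2) := by
      refine le_trans (intervalIntegral.abs_integral_le_integral_abs hb) ?_
      rw [intervalIntegral.integral_of_le hb]
      have step1 : ∫ s in Ioc r b, |φ s| ≤ ∫ s in Ioi r, |φ s| := by
        refine setIntegral_mono_set hφint.abs ?_ ?_
        · exact Filter.Eventually.of_forall fun s => abs_nonneg _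
        · exact HasSubset.Subset.eventuallyLE Ioc_subset_Ioi_self
      refine le_trans step1 ?_
      refine integral_mono_ae hφint.abs hsum ?_
      filter_upwards [ae_restrict_mem measurableSet_Ioi] with s hs
      exact hφbound s hs
    have hD1 : IntervalIntegrable (fun s => (n : ℝ) * s ^ (n - 1) * f s ^ 2) volume r b :=
      Continuous.intervalIntegrable
        ((continuous_const.mul (continuous_pow (n-1))).mul (hf.continuous.pow 2)) r b
    have hD2 : IntervalIntegrable φ volume r b := by
      rw [intervalIntegrable_iff_integrableOn_Ioc_of_le hb]
      exact hφint.mono_set Ioc_subset_Ioi_self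
    rw [intervalIntegral.integral_add hD1 hD2] at hFTC
    have habs : -(∫ s in r..b, φ s) ≤ |∫ s in r..b, φ s| := neg_le_abs _
    have hgb : g r = g b - (∫ s in r..b, (n : ℝ) * s ^ (n - 1) * f s ^ 2) - ∫ s in r..b, φ s := by
      linarith [hFTC]
    linarith
  have hI : 0 ≤ ∫ s in Ioi r, (s ^ n * f s ^ 2 + s ^ n * (deriv f s) ^ 2) := by
    refine setIntegral_nonneg measurableSet_Ioi ?_
    intro s hs
    have h0 : (0:ℝ) ≤ s ^ n := pow_nonneg (le_of_lt (lt_trans hr hs)) n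
    positivity
  refine le_of_forall_pos_le_add ?_
  intro ε hε
  obtain ⟨b, hb1, hb2⟩ := ((my_freq_small hA hε).and_eventually (Filter.eventually_ge_atTop r)).exists
  have := key b hb2
  have hgr : g r = r ^ n * f r ^ 2 := rfl
  linarith

lemma my_norm_fderiv_radial {E : Type*} [NormedAddCommGroup E] [InnerProductSpace ℝ E]
    [CompleteSpace E] (u : E → ℝ) (hu : Differentiable ℝ u)
    (hrad : ∀ x y : E, ‖x‖ = ‖y‖ → u x = u y)
    (x y : E) (h : ‖x‖ = ‖y‖) : ‖fderiv ℝ u x‖ = ‖fderiv ℝ u y‖ := by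
  set T : E ≃ₗᵢ[ℝ] E := Submodule.reflection (ℝ ∙ (x - y))ᗮ with hT
  have hTx : T x = y := Submodule.reflection_sub h
  have hcomp : u ∘ T = u := funext fun z => hrad _ _ (T.norm_map z)
  have hTd : HasFDerivAt (⇑T) (T.toContinuousLinearEquiv : E →L[ℝ] E) x := by
    have := T.toContinuousLinearEquiv.hasFDerivAt (x := x)
    simpa using this
  have h2 : fderiv ℝ (u ∘ ⇑T) x =
      (fderiv ℝ u y).comp (T.toContinuousLinearEquiv : E →L[ℝ] E) := by
    have hc : HasFDerivAt (u ∘ ⇑T)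
        ((fderiv ℝ u y).comp (T.toContinuousLinearEquiv : E →L[ℝ] E)) x := by
      have := (hu (T x)).hasFDerivAt.comp x hTd
      rwa [hTx] at this
    exact hc.fderiv
  have h3 : ‖fderiv ℝ u x‖ = ‖(fderiv ℝ u y).comp (T.toContinuousLinearEquiv : E →L[ℝ] E)‖ := by
    rw [← h2, hcomp]
  rw [h3]
  have h4 : (T.toContinuousLinearEquiv : E →L[ℝ] E)
      = T.toLinearIsometry.toContinuousLinearMap := by
    ext z; simp
  rw [h4]
  exact ContinuousLinearMap.opNorm_comp_linearIsometryEquiv _ T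


set_option maxHeartbeats 1000000 in
/-- radial Sobolev (Strauss) inequality: for N ≥ 2 there is C_N > 0 such that
every radially symmetric u ∈ H¹(ℝ^N) satisfies
|u(x)| ≤ C_N |x|^{(1−N)/2} ‖u‖_{H¹} for a.e. x ≠ 0. -/
theorem radial_sobolev_inequality (N : ℕ) (hN : 2 ≤ N) :
    ∃ C : ℝ, 0 < C ∧
      ∀ u : EuclideanSpace ℝ (Fin N) → ℝ,
        Differentiable ℝ u →
        MemLp u 2 (volume : Measure (EuclideanSpace ℝ (Fin N))) →
        MemLp (gradient u) 2 (volume : Measure (EuclideanSpace ℝ (Fin N))) →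
        (∀ x y : EuclideanSpace ℝ (Fin N), ‖x‖ = ‖y‖ → u x = u y) →
        ∀ᵐ x : EuclideanSpace ℝ (Fin N), x ≠ 0 →
          |u x| ≤ C * ‖x‖ ^ ((1 - (N : ℝ)) / 2) *
            Real.sqrt ((∫ y, ‖gradient u y‖ ^ 2) + ∫ y, (u y) ^ 2) := by
  have hfr : Module.finrank ℝ (EuclideanSpace ℝ (Fin N)) = N := by
    simp [finrank_euclideanSpace]
  haveI hnt : Nontrivial (EuclideanSpace ℝ (Fin N)) :=
    Module.nontrivial_of_finrank_pos (R := ℝ) (by rw [hfr]; omega)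
  set B : ℝ := (volume (Metric.ball (0 : EuclideanSpace ℝ (Fin N)) 1)).toReal with hB
  have hBpos : 0 < B := ENNReal.toReal_pos
    (Metric.measure_ball_pos volume 0 one_pos).ne' measure_ball_lt_top.ne
  set c : ℝ := (N : ℝ) * B with hc
  have hcpos : 0 < c := by positivity
  refine ⟨Real.sqrt c⁻¹, Real.sqrt_pos.2 (by positivity), ?_⟩
  intro u hdiff hu2 hgrad2 hrad
  set i0 : Fin N := ⟨0, by omega⟩ with hi0
  set e : EuclideanSpace ℝ (Fin N) := EuclideanSpace.single i0 (1:ℝ) with he'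
  have he : ‖e‖ = 1 := by rw [he', EuclideanSpace.norm_single]; norm_num
  have hne : ∀ r : ℝ, 0 ≤ r → ‖r • e‖ = r := by
    intro r hr
    rw [norm_smul, he, mul_one, Real.norm_eq_abs, abs_of_nonneg hr]
  set f : ℝ → ℝ := fun r => u (r • e) with hf'
  have hue : ∀ x : EuclideanSpace ℝ (Fin N), u x = f ‖x‖ :=
    fun x => hrad x (‖x‖ • e) (hne ‖x‖ (norm_nonneg x)).symm
  have hf : Differentiable ℝ f := hdiff.comp (differentiable_id.smul_const e)
  have hfd : ∀ r : ℝ, HasDerivAt f ((fderiv ℝ u (r • e)) e) r := by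
    intro r
    have h1 : HasDerivAt (fun t : ℝ => t • e) e r := by
      simpa using (hasDerivAt_id r).smul_const e
    exact (hdiff (r • e)).hasFDerivAt.comp_hasDerivAt r h1
  have hderiveq : ∀ r : ℝ, deriv f r = fderiv ℝ u (r • e) e := fun r => (hfd r).deriv
  have hbd : ∀ r : ℝ, |deriv f r| ≤ ‖fderiv ℝ u (r • e)‖ := by
    intro r
    rw [hderiveq r, ← Real.norm_eq_abs]
    calc ‖fderiv ℝ u (r • e) e‖ ≤ ‖fderiv ℝ u (r • e)‖ * ‖e‖ :=
          ContinuousLinearMap.le_opNorm _ _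
      _ = ‖fderiv ℝ u (r • e)‖ := by rw [he, mul_one]
  have hgradnorm : ∀ x : EuclideanSpace ℝ (Fin N), ‖gradient u x‖ = ‖fderiv ℝ u x‖ := by
    intro x
    rw [gradient]
    exact LinearIsometryEquiv.norm_map _ _
  have hradf : ∀ x : EuclideanSpace ℝ (Fin N), ‖fderiv ℝ u x‖ = ‖fderiv ℝ u (‖x‖ • e)‖ :=
    fun x => my_norm_fderiv_radial u hdiff hrad _ _ (hne ‖x‖ (norm_nonneg x)).symm
  set G : ℝ → ℝ := fun s => ‖fderiv ℝ u (s • e)‖ ^ 2 with hG'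
  have hGm : Measurable G := by
    have h1 : Measurable fun s : ℝ => fderiv ℝ u (s • e) :=
      (measurable_fderiv ℝ u).comp ((continuous_id.smul continuous_const).measurable)
    exact (h1.norm).pow_const 2
  have hu2' : Integrable (fun x : EuclideanSpace ℝ (Fin N) => u x ^ 2) volume :=
    hu2.integrable_sq
  have hg2' : Integrable (fun x : EuclideanSpace ℝ (Fin N) => ‖gradient u x‖ ^ 2) volume :=
    hgrad2.norm.integrable_sq
  -- 1d integrability
  have hA0 : IntegrableOn (fun s : ℝ => s ^ (N - 1) * f s ^ 2) (Ioi 0) volume := by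
    have h1 : Integrable (fun x : EuclideanSpace ℝ (Fin N) => f ‖x‖ ^ 2) volume :=
      hu2'.congr (Filter.Eventually.of_forall fun x => by simp only [hue x])
    have := my_integrableOn_polar volume (fun s => f s ^ 2)
      ((hf.continuous.measurable).pow_const 2) (fun r => sq_nonneg _) h1
    rwa [hfr] at this
  have hB0' : IntegrableOn (fun s : ℝ => s ^ (N - 1) * G s) (Ioi 0) volume := by
    have h1 : Integrable (fun x : EuclideanSpace ℝ (Fin N) => G ‖x‖) volume := by
      refine hg2'.congr (Filter.Eventually.of_forall fun x => ?_)
      rw [hG']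
      simp only
      rw [← hradf x, ← hgradnorm x]
    have := my_integrableOn_polar volume G hGm (fun r => sq_nonneg _) h1
    rwa [hfr] at this
  have hderivG : ∀ s : ℝ, deriv f s ^ 2 ≤ G s := by
    intro s
    rw [hG']
    simp only
    rw [← sq_abs (deriv f s)]
    exact pow_le_pow_left₀ (abs_nonneg _) (hbd s) 2
  have hB0 : IntegrableOn (fun s : ℝ => s ^ (N - 1) * deriv f s ^ 2) (Ioi 0) volume := by
    refine Integrable.mono' hB0' ?_ ?_
    · exact ((measurable_id.pow_const _).mul ((measurable_deriv f).pow_const 2)).aestronglyMeasurable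
    · filter_upwards [ae_restrict_mem measurableSet_Ioi] with s hs
      have hs0 : (0:ℝ) ≤ s ^ (N - 1) := pow_nonneg (le_of_lt hs) _
      rw [Real.norm_eq_abs, abs_mul, abs_of_nonneg hs0, abs_of_nonneg (sq_nonneg _)]
      exact mul_le_mul_of_nonneg_left (hderivG s) hs0
  -- polar identities
  have hIu : ∫ x : EuclideanSpace ℝ (Fin N), u x ^ 2 =
      c * ∫ s in Ioi (0:ℝ), s ^ (N - 1) * f s ^ 2 := by
    have h1 : ∫ x : EuclideanSpace ℝ (Fin N), u x ^ 2
        = ∫ x : EuclideanSpace ℝ (Fin N), f ‖x‖ ^ 2 :=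
      integral_congr_ae (Filter.Eventually.of_forall fun x => by simp only [hue x])
    rw [h1, MeasureTheory.integral_fun_norm_addHaar volume (fun s => f s ^ 2), hfr]
    simp only [nsmul_eq_mul, smul_eq_mul]
    rw [hc, mul_assoc]
    rfl
  have hIg : ∫ x : EuclideanSpace ℝ (Fin N), ‖gradient u x‖ ^ 2 =
      c * ∫ s in Ioi (0:ℝ), s ^ (N - 1) * G s := by
    have h1 : ∫ x : EuclideanSpace ℝ (Fin N), ‖gradient u x‖ ^ 2
        = ∫ x : EuclideanSpace ℝ (Fin N), G ‖x‖ := by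
      refine integral_congr_ae (Filter.Eventually.of_forall fun x => ?_)
      rw [hG']; simp only; rw [← hradf x, ← hgradnorm x]
    rw [h1, MeasureTheory.integral_fun_norm_addHaar volume G, hfr]
    simp only [nsmul_eq_mul, smul_eq_mul]
    rw [hc, mul_assoc]
    rfl
  set S : ℝ := (∫ y : EuclideanSpace ℝ (Fin N), ‖gradient u y‖ ^ 2)
    + ∫ y : EuclideanSpace ℝ (Fin N), (u y) ^ 2 with hS
  -- pointwise bound
  refine Filter.Eventually.of_forall ?_
  intro x hx
  have hr : 0 < ‖x‖ := norm_pos_iff.2 hx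
  set r : ℝ := ‖x‖ with hrdef
  have key := my_key1d (N - 1) f hf hr
    (hA0.mono_set (Ioi_subset_Ioi (norm_nonneg x)))
    (hB0.mono_set (Ioi_subset_Ioi (norm_nonneg x)))
  -- extend integral to Ioi 0 and bound
  have hext : ∫ s in Ioi r, (s ^ (N-1) * f s ^ 2 + s ^ (N-1) * deriv f s ^ 2)
      ≤ ∫ s in Ioi (0:ℝ), (s ^ (N-1) * f s ^ 2 + s ^ (N-1) * deriv f s ^ 2) := by
    refine setIntegral_mono_set (hA0.add hB0) ?_ ?_
    · filter_upwards [ae_restrict_mem measurableSet_Ioi] with s hs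
      have hs0 : (0:ℝ) ≤ s ^ (N-1) := pow_nonneg (le_of_lt hs) _
      positivity
    · exact HasSubset.Subset.eventuallyLE (Ioi_subset_Ioi (norm_nonneg x))
  have hsplit : ∫ s in Ioi (0:ℝ), (s ^ (N-1) * f s ^ 2 + s ^ (N-1) * deriv f s ^ 2)
      = (∫ s in Ioi (0:ℝ), s ^ (N-1) * f s ^ 2)
        + ∫ s in Ioi (0:ℝ), s ^ (N-1) * deriv f s ^ 2 :=
    integral_add hA0 hB0
  have hBle : ∫ s in Ioi (0:ℝ), s ^ (N-1) * deriv f s ^ 2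
      ≤ ∫ s in Ioi (0:ℝ), s ^ (N-1) * G s := by
    refine integral_mono_ae hB0 hB0' ?_
    filter_upwards [ae_restrict_mem measurableSet_Ioi] with s hs
    exact mul_le_mul_of_nonneg_left (hderivG s) (pow_nonneg (le_of_lt hs) _)
  have hKey2 : r ^ (N-1) * u x ^ 2 ≤ S / c := by
    rw [hue x, ← hrdef]
    have h1 : (∫ s in Ioi (0:ℝ), s ^ (N-1) * f s ^ 2)
        + ∫ s in Ioi (0:ℝ), s ^ (N-1) * G s = S / c := by
      field_simp [hS, hIu, hIg]
      rw [hS, hIu, hIg]; ring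
    linarith [key, hext, hsplit, hBle, h1]
  -- final arithmetic
  have hSnn : 0 ≤ S := by
    rw [hS]
    have h1 : (0:ℝ) ≤ ∫ y : EuclideanSpace ℝ (Fin N), u y ^ 2 :=
      integral_nonneg fun y => sq_nonneg _
    have h2 : (0:ℝ) ≤ ∫ y : EuclideanSpace ℝ (Fin N), ‖gradient u y‖ ^ 2 :=
      integral_nonneg fun y => sq_nonneg _
    linarith
  have hrpos : (0:ℝ) < r ^ (N-1) := by positivity
  have hsq : u x ^ 2 ≤ S / c * (r ^ (N-1))⁻¹ := by
    calc u x ^ 2 = (r ^ (N-1) * u x ^ 2) / r ^ (N-1) := by field_simp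
      _ ≤ (S / c) / r ^ (N-1) := by
          exact div_le_div_of_nonneg_right hKey2 hrpos.le
      _ = S / c * (r ^ (N-1))⁻¹ := by rw [div_eq_mul_inv]
  have habs : |u x| ≤ Real.sqrt (S / c * (r ^ (N-1))⁻¹) := by
    rw [← Real.sqrt_sq_eq_abs]
    exact Real.sqrt_le_sqrt hsq
  have hfinal : Real.sqrt (S / c * (r ^ (N-1))⁻¹)
      = Real.sqrt c⁻¹ * r ^ ((1 - (N:ℝ)) / 2) * Real.sqrt S := by
    have hrpow : ((r : ℝ) ^ (N-1 : ℕ))⁻¹ = r ^ (((1:ℝ) - N)) := by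
      rw [← Real.rpow_natCast r (N-1), ← Real.rpow_neg (le_of_lt hr)]
      congr 1
      rw [Nat.cast_sub (by omega : 1 ≤ N)]
      ring
    rw [div_eq_mul_inv S c, hrpow]
    rw [Real.sqrt_mul (mul_nonneg hSnn (inv_nonneg.mpr hcpos.le)), Real.sqrt_mul hSnn]
    have : Real.sqrt (r ^ ((1:ℝ) - N)) = r ^ ((1 - (N:ℝ)) / 2) := by
      rw [Real.sqrt_eq_rpow, ← Real.rpow_mul (le_of_lt hr)]
      congr 1
      ring
    rw [this]
    ring
  rw [hfinal] at habs
  exact habs
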